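/- arXiv:2301.06949 — 2 statements merged into one kernel-verified Lean document; each statement's English description precedes it below -/
import Mathlib

section
/- Let k be a field of characteristic zero and let k[ε] denote the ring of dual numbers over k. Regard k as a k[ε]-module via the augmentation ε ↦ 0. Then for every natural number n, the Ext group Ext^n_{k[ε]}(k, k), computed in the abelian category of k[ε]-modules, is a one-dimensional k-vector space. -/
/-!
STATEMENT 0: Let `k` be a field of characteristic zero and `k[ε]` the ring of dual
numbers.  Regard `k` as a `k[ε]`-module via the augmentation `ε ↦ 0`.  Then for every
natural number `n`, `Ext^n_{k[ε]}(k, k)`, computed in the abelian category of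
`k[ε]`-modules, is a one-dimensional `k`-vector space.
-/

open CategoryTheory

/-- `k` as a module over the dual numbers `k[ε]` via the augmentation `ε ↦ 0`. -/
noncomputable instance dualNumberAugModule (k : Type) [Field k] :
    Module (DualNumber k) k :=
  Module.compHom k (TrivSqZeroExt.fstHom k k k).toRingHom

/-!
Over `k[ε]` the kernel of multiplication by `ε` is `ε k[ε]`, so the periodic complex
`⋯ → k[ε] →ε k[ε] →ε k[ε]` augmented by `k[ε] → k` is a free resolution of `k`. Since `ε` acts
by zero on `k`, every differential of `Hom(-, k)` applied to it vanishes, hence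
`Ext^n(k, k) ≅ Hom(k[ε], k) ≅ k` in every degree.
-/

variable {R S M N : Type*} [CommSemiring R] [Semiring S] [Algebra R S] [AddCommMonoid M]
  [AddCommMonoid N] [Module S M] [Module S N] in
def RestrictScalars.linearEquivCongr (e : M ≃ₗ[S] N) :
    RestrictScalars R S M ≃ₗ[R] RestrictScalars R S N where
  __ := e.toAddEquiv
  map_smul' c x := e.map_smul (algebraMap R S c) x

namespace DualNumber

section CommRing

variable {R : Type*} [CommRing R]

noncomputable def mulEps : DualNumber R →ₗ[DualNumber R] DualNumber R :=
  LinearMap.mulLeft (DualNumber R) ε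

lemma mulEps_apply (x : DualNumber R) : mulEps x = ε * x := rfl

lemma mulEps_comp_mulEps : mulEps.comp mulEps = (0 : DualNumber R →ₗ[DualNumber R] _) :=
  LinearMap.ext fun x => by
    rw [LinearMap.comp_apply, mulEps_apply, mulEps_apply, ← mul_assoc, eps_mul_eps, zero_mul,
      LinearMap.zero_apply]

lemma exists_eps_mul_eq {x : DualNumber R} (hx : x.fst = 0) : ∃ y, ε * y = x :=
  ⟨TrivSqZeroExt.inl x.snd, by ext <;> simp [hx]⟩

lemma exact_mulEps_mulEps : Function.Exact (mulEps (R := R)) mulEps := by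
  intro x
  refine ⟨fun hx => exists_eps_mul_eq ?_, ?_⟩
  · simpa [mulEps_apply] using congrArg TrivSqZeroExt.snd hx
  · rintro ⟨y, rfl⟩
    exact LinearMap.congr_fun mulEps_comp_mulEps y

noncomputable def epsComplex (R : Type*) [CommRing R] :
    ChainComplex (ModuleCat (DualNumber R)) ℕ :=
  ChainComplex.of (fun _ => ModuleCat.of (DualNumber R) (DualNumber R))
    (fun _ => ModuleCat.ofHom mulEps) (fun _ => ModuleCat.hom_ext mulEps_comp_mulEps)

lemma epsComplex_d (n : ℕ) : (epsComplex R).d (n + 1) n = ModuleCat.ofHom mulEps :=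
  ChainComplex.of_d (fun _ => ModuleCat.of (DualNumber R) (DualNumber R))
    (fun _ => ModuleCat.ofHom mulEps) n

lemma epsComplex_exactAt_succ (n : ℕ) : (epsComplex R).ExactAt (n + 1) := by
  rw [HomologicalComplex.exactAt_iff' _ (n + 2) (n + 1) n (by simp) (by simp),
    ShortComplex.moduleCat_exact_iff]
  simp only [HomologicalComplex.shortComplexFunctor'_obj_f,
    HomologicalComplex.shortComplexFunctor'_obj_g]
  rw [epsComplex_d, epsComplex_d]
  exact fun x hx => (exact_mulEps_mulEps x).1 hx

end CommRing

section Field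

variable {k : Type} [Field k]

noncomputable def augmentation : DualNumber k →ₗ[DualNumber k] k where
  toFun := TrivSqZeroExt.fst
  map_add' := TrivSqZeroExt.fst_add
  map_smul' := TrivSqZeroExt.fst_mul

lemma exact_mulEps_augmentation : Function.Exact (mulEps (R := k)) augmentation := fun x =>
  ⟨exists_eps_mul_eq, by rintro ⟨y, rfl⟩; exact zero_mul y.fst⟩

lemma augmentation_surjective : Function.Surjective (augmentation (k := k)) :=
  fun c => ⟨TrivSqZeroExt.inl c, rfl⟩

variable (k) in
noncomputable def augResolution.π :
    epsComplex k ⟶ (ChainComplex.single₀ _).obj (ModuleCat.of (DualNumber k) k) :=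
  ((epsComplex k).toSingle₀Equiv _).symm ⟨ModuleCat.ofHom augmentation, by
    rw [epsComplex_d]
    exact ModuleCat.hom_ext exact_mulEps_augmentation.linearMap_comp_eq_zero⟩

lemma augResolution_quasiIso : QuasiIso (augResolution.π k) where
  quasiIsoAt
  | 0 => by
      rw [ChainComplex.quasiIsoAt₀_iff, ShortComplex.quasiIso_iff_of_zeros' _ rfl rfl rfl]
      constructor
      · rw [ShortComplex.moduleCat_exact_iff]
        simp only [HomologicalComplex.shortComplexFunctor'_obj_f,
          HomologicalComplex.shortComplexFunctor'_map_τ₂, epsComplex_d, augResolution.π]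
        exact fun x hx => (exact_mulEps_augmentation x).1 hx
      · rw [ModuleCat.epi_iff_surjective]
        exact augmentation_surjective (k := k)
  | n + 1 => by
      rw [quasiIsoAt_iff_exactAt' (hL := ChainComplex.exactAt_succ_single_obj ..)]
      exact epsComplex_exactAt_succ n

variable (k) in
noncomputable def augResolution : ProjectiveResolution (ModuleCat.of (DualNumber k) k) where
  complex := epsComplex k
  projective _ := inferInstanceAs (Projective (ModuleCat.of (DualNumber k) (DualNumber k)))
  π := augResolution.π k
  quasiIso := augResolution_quasiIso

lemma linearMap_comp_mulEps (f : DualNumber k →ₗ[DualNumber k] k) : f ∘ₗ mulEps = 0 :=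
  LinearMap.ext fun x => by
    rw [LinearMap.comp_apply, mulEps_apply, ← smul_eq_mul, map_smul]
    exact zero_mul _

lemma epsComplex_d_comp_eq_zero (i j : ℕ)
    (f : (epsComplex k).X i ⟶ ModuleCat.of (DualNumber k) k) : (epsComplex k).d j i ≫ f = 0 := by
  obtain rfl | hji := eq_or_ne j (i + 1)
  · rw [epsComplex_d]
    exact ModuleCat.hom_ext (linearMap_comp_mulEps f.hom)
  · rw [(epsComplex k).shape j i fun h => hji h.symm, Limits.zero_comp]

lemma linearYonedaObj_epsComplex_d (i j : ℕ) :
    ((epsComplex k).linearYonedaObj (DualNumber k) (ModuleCat.of (DualNumber k) k)).d i j = 0 := by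
  ext f
  exact epsComplex_d_comp_eq_zero i j f

variable (k) in
noncomputable def extAugIso (n : ℕ) :
    ((Ext (DualNumber k) (ModuleCat (DualNumber k)) n).obj
      (Opposite.op (ModuleCat.of (DualNumber k) k))).obj (ModuleCat.of (DualNumber k) k) ≅
    ModuleCat.of (DualNumber k) k :=
  let K := (epsComplex k).linearYonedaObj (DualNumber k) (ModuleCat.of (DualNumber k) k)
  (augResolution k).isoExt n _ ≪≫
    (K.isoHomologyπ _ n rfl (linearYonedaObj_epsComplex_d _ _)).symm ≪≫
    K.iCyclesIso n _ rfl (linearYonedaObj_epsComplex_d _ _) ≪≫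
    (ModuleCat.homLinearEquiv ≪≫ₗ
      LinearMap.ringLmapEquivSelf (DualNumber k) (DualNumber k) k).toModuleIso

variable (k) in
noncomputable def restrictScalarsAugLinearEquiv :
    RestrictScalars k (DualNumber k) k ≃ₗ[k] k where
  __ := RestrictScalars.addEquiv k (DualNumber k) k
  map_smul' _ _ := rfl

end Field

end DualNumber

theorem ext_dualNumber_aug_one_dimensional_general (k : Type) [Field k] (n : ℕ) :
    Module.finrank k (RestrictScalars k (DualNumber k)
      (((Ext (DualNumber k) (ModuleCat (DualNumber k)) n).obj
          (Opposite.op (ModuleCat.of (DualNumber k) k))).obj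
        (ModuleCat.of (DualNumber k) k))) = 1 := by
  rw [(RestrictScalars.linearEquivCongr (DualNumber.extAugIso k n).toLinearEquiv ≪≫ₗ
    DualNumber.restrictScalarsAugLinearEquiv k).finrank_eq]
  exact Module.finrank_self k

theorem ext_dualNumber_aug_one_dimensional (k : Type) [Field k] [CharZero k] (n : ℕ) :
    Module.finrank k (RestrictScalars k (DualNumber k)
      (((Ext (DualNumber k) (ModuleCat (DualNumber k)) n).obj
          (Opposite.op (ModuleCat.of (DualNumber k) k))).obj
        (ModuleCat.of (DualNumber k) k))) = 1 :=
  ext_dualNumber_aug_one_dimensional_general k n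
end

section
/- Let k be a field of characteristic zero, d a natural number, and R = k[x₁, …, x_d] the polynomial ring in d variables. Define the algebraic de Rham complex of R over k with terms Ω^j = ⨁_{1 ≤ i₁ < ⋯ < i_j ≤ d} R·dx_{i₁}∧⋯∧dx_{i_j} (the j-th exterior power of the free R-module on symbols dx₁, …, dx_d) and differential determined by d(f · ω) = Σ_{i=1}^d (∂f/∂x_i) dx_i ∧ ω for f ∈ R and basis forms ω, where ∂/∂x_i denotes the formal partial derivative. Then this complex is exact in every positive degree, and the kernel of d: Ω⁰ → Ω¹ is exactly the constants k ⊆ R (the algebraic Poincaré lemma). -/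
/-!
Let `E = ∑ i, x_i ∂/∂x_i` be the Euler vector field and `ι` contraction with it. Cartan's
formula `d ι + ι d = L_E` holds, and `L_E` multiplies `x^m dx_S` by `|m| + |S|`. In positive
form degree this factor never vanishes, so in characteristic zero `L_E` is invertible there by
scaling coefficients, and its inverse commutes with `d`. Hence `ι ∘ L_E⁻¹` is a contracting
homotopy: a closed form `ω` of positive degree equals `d (ι L_E⁻¹ ω)`. In degree zero,
`df = 0` gives `E f = 0`, i.e. `|m| • coeff m f = 0` for every `m`, so `f` is constant.
-/

open MvPolynomial

/-- The coordinates of a `j`-form on affine `d`-space: each subset `S ⊆ {1,…,d}` of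
cardinality `j` (indexing the basis form `dx_S = dx_{i₁} ∧ ⋯ ∧ dx_{i_j}`,
`i₁ < ⋯ < i_j ∈ S`) is assigned its coefficient, a polynomial. -/
abbrev OmegaForm (k : Type) [Field k] (d j : ℕ) : Type :=
  {S : Finset (Fin d) // S.card = j} → MvPolynomial (Fin d) k

/-- The de Rham differential in coordinates: for a `j`-form `ω`,
`(dω)_T = Σ_{i ∈ T} (−1)^{#{s ∈ T : s < i}} ∂(ω_{T∖{i}})/∂x_i`, which is the unique
`k`-linear map satisfying `d(f·dx_S) = Σ_i (∂f/∂x_i) dx_i ∧ dx_S`. -/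
noncomputable def deRhamD (k : Type) [Field k] (d j : ℕ) (ω : OmegaForm k d j) :
    OmegaForm k d (j + 1) :=
  fun T => ∑ i ∈ T.1.attach,
    (-1 : MvPolynomial (Fin d) k) ^ (T.1.filter (fun s => s < i.1)).card *
      MvPolynomial.pderiv i.1
        (ω ⟨T.1.erase i.1, by simp [Finset.card_erase_of_mem i.2, T.2]⟩)

open Finset

namespace MvDeRham

section Euler

variable {σ R : Type*} [CommRing R] [Fintype σ]

noncomputable def euler (f : MvPolynomial σ R) : MvPolynomial σ R :=
  ∑ i, X i * pderiv i f

lemma coeff_euler (f : MvPolynomial σ R) (m : σ →₀ ℕ) :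
    coeff m (euler f) = m.degree * coeff m f := by
  classical
  induction f using MvPolynomial.induction_on' with
  | monomial n a =>
    simp only [euler, X_mul_pderiv_monomial, ← sum_smul, coeff_smul, coeff_monomial,
      Finsupp.degree_eq_sum]
    split_ifs with h <;> simp [h]
  | add p q hp hq =>
    rw [euler] at hp hq ⊢
    simp only [map_add, mul_add, sum_add_distrib, coeff_add, hp, hq]

end Euler

section EulerInverse

variable {σ k : Type*} [Field k]

/-- On `p`-forms the Lie derivative along the Euler field is `f ↦ p * f + euler f`, which
scales `x^m` by `|m| + p`; this undoes it. -/
noncomputable def eulerInv (p : ℕ) (f : MvPolynomial σ k) : MvPolynomial σ k :=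
  ∑ m ∈ f.support, monomial m (((m.degree + p : ℕ) : k)⁻¹ * coeff m f)

lemma coeff_eulerInv (p : ℕ) (f : MvPolynomial σ k) (m : σ →₀ ℕ) :
    coeff m (eulerInv p f) = ((m.degree + p : ℕ) : k)⁻¹ * coeff m f := by
  classical
  simp +contextual [eulerInv, coeff_sum, coeff_monomial]

lemma eulerInv_zero (p : ℕ) : eulerInv p (0 : MvPolynomial σ k) = 0 := by
  simp [eulerInv]

lemma eulerInv_sum {ι : Type*} (p : ℕ) (s : Finset ι) (f : ι → MvPolynomial σ k) :
    eulerInv p (∑ a ∈ s, f a) = ∑ a ∈ s, eulerInv p (f a) := by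
  ext m
  simp only [coeff_eulerInv, coeff_sum, mul_sum]

lemma eulerInv_C_mul (p : ℕ) (c : k) (f : MvPolynomial σ k) :
    eulerInv p (C c * f) = C c * eulerInv p f := by
  ext m
  simp only [coeff_eulerInv, coeff_C_mul]
  ring

lemma pderiv_eulerInv (p : ℕ) (i : σ) (f : MvPolynomial σ k) :
    pderiv i (eulerInv p f) = eulerInv (p + 1) (pderiv i f) := by
  ext m
  rw [coeff_pderiv, coeff_eulerInv, coeff_eulerInv, coeff_pderiv, map_add, Finsupp.degree_single]
  push_cast
  ring

variable [Fintype σ] [CharZero k]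

lemma natCast_mul_eulerInv_add_euler {p : ℕ} (hp : 0 < p) (f : MvPolynomial σ k) :
    p * eulerInv p f + euler (eulerInv p f) = f := by
  ext m
  have hm : ((m.degree + p : ℕ) : k) ≠ 0 := Nat.cast_ne_zero.mpr (by omega)
  rw [coeff_add, coeff_euler, ← C_eq_coe_nat, coeff_C_mul, coeff_eulerInv]
  push_cast at hm ⊢
  field_simp
  ring

lemma eq_C_of_forall_pderiv_eq_zero {f : MvPolynomial σ k}
    (hf : ∀ i, pderiv i f = 0) : f = C (coeff 0 f) := by
  classical
  ext m
  have hm : (m.degree : k) * coeff m f = 0 := by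
    rw [← coeff_euler, euler, sum_eq_zero fun i _ => by rw [hf i, mul_zero], coeff_zero]
  rcases eq_or_ne m 0 with rfl | hm0
  · simp
  · rw [coeff_C, if_neg (Ne.symm hm0)]
    refine (mul_eq_zero.mp hm).resolve_left ?_
    exact Nat.cast_ne_zero.mpr ((Finsupp.degree_eq_zero_iff m).not.mpr hm0)

end EulerInverse

section Forms

variable {σ R : Type*} [LinearOrder σ] [CommRing R]

/-- The sign in `dx_i ∧ dx_S = wedgeSign S i • dx_{insert i S}` for `i ∉ S`. -/
noncomputable def wedgeSign (S : Finset σ) (i : σ) : MvPolynomial σ R :=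
  (-1) ^ #{s ∈ S | s < i}

/-- Forms of all degrees at once: `g S` is the coefficient of `dx_S`. -/
noncomputable def extDeriv (g : Finset σ → MvPolynomial σ R) (T : Finset σ) :
    MvPolynomial σ R :=
  ∑ i ∈ T, wedgeSign T i * pderiv i (g (T.erase i))

lemma wedgeSign_eq_C (S : Finset σ) (i : σ) :
    (wedgeSign S i : MvPolynomial σ R) = C ((-1) ^ #{s ∈ S | s < i}) := by
  simp [wedgeSign]

lemma wedgeSign_mul_self (S : Finset σ) (i : σ) :
    (wedgeSign S i : MvPolynomial σ R) * wedgeSign S i = 1 := by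
  rw [wedgeSign, ← mul_pow, neg_one_mul, neg_neg, one_pow]

lemma pderiv_wedgeSign_mul (S : Finset σ) (i j : σ) (f : MvPolynomial σ R) :
    pderiv i (wedgeSign S j * f) = wedgeSign S j * pderiv i f := by
  rw [wedgeSign_eq_C, pderiv_C_mul]

lemma wedgeSign_insert {S : Finset σ} {l : σ} (hl : l ∉ S) (i : σ) :
    (wedgeSign (insert l S) i : MvPolynomial σ R) =
      (if l < i then -1 else 1) * wedgeSign S i := by
  rw [wedgeSign, wedgeSign, filter_insert]
  split_ifs
  · rw [card_insert_of_notMem (by simp [hl]), pow_succ, mul_comm]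
  · rw [one_mul]

lemma wedgeSign_eq_mul_wedgeSign_erase {S : Finset σ} {i : σ} (hi : i ∈ S) (l : σ) :
    (wedgeSign S l : MvPolynomial σ R) = (if i < l then -1 else 1) * wedgeSign (S.erase i) l := by
  rw [← wedgeSign_insert (notMem_erase i S), insert_erase hi]

lemma wedgeSign_mul_wedgeSign_insert {T : Finset σ} {i l : σ} (hi : i ∈ T) (hl : l ∉ T) :
    (wedgeSign T l : MvPolynomial σ R) * wedgeSign (insert l T) i =
      -(wedgeSign T i * wedgeSign (T.erase i) l) := by
  have hil : i ≠ l := fun h => hl (h ▸ hi)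
  rw [wedgeSign_insert hl, wedgeSign_eq_mul_wedgeSign_erase hi l]
  rcases hil.lt_or_gt with h | h
  · simp [h, h.not_gt]; ring
  · simp [h, h.not_gt]; ring

lemma extDeriv_singleton (g : Finset σ → MvPolynomial σ R) (i : σ) :
    extDeriv g {i} = pderiv i (g ∅) := by
  simp [extDeriv, wedgeSign, filter_singleton]

variable [Fintype σ]

/-- Contraction with the Euler vector field `∑ i, X i • ∂/∂x_i`. -/
noncomputable def eulerContract (g : Finset σ → MvPolynomial σ R) (S : Finset σ) :
    MvPolynomial σ R :=
  ∑ i ∈ Sᶜ, wedgeSign S i * (X i * g (insert i S))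

lemma extDeriv_eulerContract (g : Finset σ → MvPolynomial σ R) (T : Finset σ) :
    extDeriv (eulerContract g) T =
      ∑ i ∈ T, (g T + X i * pderiv i (g T)) +
        ∑ i ∈ T, ∑ l ∈ Tᶜ, wedgeSign T i * wedgeSign (T.erase i) l *
          (X l * pderiv i (g (insert l (T.erase i)))) := by
  rw [extDeriv, ← sum_add_distrib]
  refine sum_congr rfl fun i hi => ?_
  rw [eulerContract, compl_erase, sum_insert (notMem_compl.mpr hi), insert_erase hi, map_add,
    mul_add, map_sum, mul_sum]
  congr 1
  · rw [pderiv_wedgeSign_mul, wedgeSign_eq_mul_wedgeSign_erase hi i, if_neg (lt_irrefl i), one_mul,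
      ← mul_assoc, wedgeSign_mul_self, one_mul, pderiv_mul, pderiv_X_self, one_mul]
  · refine sum_congr rfl fun l hl => ?_
    have hli : l ≠ i := fun h => mem_compl.mp hl (h ▸ hi)
    rw [pderiv_wedgeSign_mul, pderiv_mul, pderiv_X_of_ne hli, zero_mul, zero_add]
    ring

lemma eulerContract_extDeriv (g : Finset σ → MvPolynomial σ R) (T : Finset σ) :
    eulerContract (extDeriv g) T =
      ∑ l ∈ Tᶜ, X l * pderiv l (g T) -
        ∑ i ∈ T, ∑ l ∈ Tᶜ, wedgeSign T i * wedgeSign (T.erase i) l *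
          (X l * pderiv i (g (insert l (T.erase i)))) := by
  rw [sum_comm, ← sum_sub_distrib]
  refine sum_congr rfl fun l hl => ?_
  have hlT : l ∉ T := mem_compl.mp hl
  rw [extDeriv, sum_insert hlT, erase_insert hlT, wedgeSign_insert hlT l, if_neg (lt_irrefl l),
    one_mul, sub_eq_add_neg, ← sum_neg_distrib, mul_add, mul_add, mul_sum, mul_sum]
  congr 1
  · linear_combination (X l * pderiv l (g T)) * wedgeSign_mul_self (R := R) T l
  · refine sum_congr rfl fun i hi => ?_
    rw [erase_insert_of_ne (fun h : l = i => hlT (h ▸ hi))]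
    linear_combination (X l * pderiv i (g (insert l (T.erase i)))) *
      wedgeSign_mul_wedgeSign_insert (R := R) hi hlT

theorem extDeriv_eulerContract_add_eulerContract_extDeriv
    (g : Finset σ → MvPolynomial σ R) (T : Finset σ) :
    extDeriv (eulerContract g) T + eulerContract (extDeriv g) T =
      #T * g T + euler (g T) := by
  rw [extDeriv_eulerContract, eulerContract_extDeriv, euler, ← sum_add_sum_compl T,
    sum_add_distrib, sum_const, nsmul_eq_mul]
  ring

end Forms

section Homotopy

variable {σ k : Type*} [LinearOrder σ] [Field k]

lemma extDeriv_eulerInv (g : Finset σ → MvPolynomial σ k) (T : Finset σ) :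
    extDeriv (fun S => eulerInv #S (g S)) T = eulerInv #T (extDeriv g T) := by
  rw [extDeriv, extDeriv, eulerInv_sum]
  refine sum_congr rfl fun i hi => ?_
  rw [pderiv_eulerInv, card_erase_add_one hi, wedgeSign_eq_C, eulerInv_C_mul]

variable [Fintype σ] [CharZero k]

theorem extDeriv_eulerContract_eulerInv (g : Finset σ → MvPolynomial σ k) {T : Finset σ}
    (hT : T.Nonempty) (hg : ∀ U : Finset σ, #U = #T + 1 → extDeriv g U = 0) :
    extDeriv (eulerContract fun S => eulerInv #S (g S)) T = g T := by
  have hclosed : eulerContract (extDeriv fun S => eulerInv #S (g S)) T = 0 := by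
    refine sum_eq_zero fun l hl => ?_
    rw [extDeriv_eulerInv, hg _ (card_insert_of_notMem (mem_compl.mp hl)), eulerInv_zero,
      mul_zero, mul_zero]
  rw [← add_zero (extDeriv _ T), ← hclosed, extDeriv_eulerContract_add_eulerContract_extDeriv]
  exact natCast_mul_eulerInv_add_euler (card_pos.mpr hT) (g T)

end Homotopy

lemma deRhamD_eq_extDeriv {k : Type} [Field k] {d j : ℕ} {ω : OmegaForm k d j}
    {g : Finset (Fin d) → MvPolynomial (Fin d) k} (hg : ∀ S, ω S = g S.1)
    (T : {S : Finset (Fin d) // S.card = j + 1}) : deRhamD k d j ω T = extDeriv g T.1 := by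
  rw [deRhamD, extDeriv, ← sum_attach T.1]
  refine sum_congr rfl fun i _ => ?_
  rw [hg, wedgeSign]

end MvDeRham

/-- Algebraic Poincaré lemma: the polynomial de Rham complex is exact in positive
degrees, and the kernel of `d : Ω⁰ → Ω¹` consists exactly of the constants. -/
theorem mvPolynomial_deRham_exact (k : Type) [Field k] [CharZero k] (d : ℕ) :
    (∀ (j : ℕ) (ω : OmegaForm k d (j + 1)), deRhamD k d (j + 1) ω = 0 →
      ∃ η : OmegaForm k d j, deRhamD k d j η = ω) ∧
    (∀ f : OmegaForm k d 0, deRhamD k d 0 f = 0 ↔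
      ∃ c : k, f = fun _ => MvPolynomial.C c) := by
  open MvDeRham in
  refine ⟨fun j ω hω => ?_, fun f => ⟨fun hf => ?_, ?_⟩⟩
  · let g := Function.extend Subtype.val ω 0
    have hg : ∀ S, ω S = g S.1 := fun S => (Subtype.val_injective.extend_apply ω 0 S).symm
    refine ⟨fun S => eulerContract (fun S => eulerInv #S (g S)) S.1, funext fun T => ?_⟩
    rw [deRhamD_eq_extDeriv (fun _ => rfl), hg]
    refine extDeriv_eulerContract_eulerInv g (card_pos.mp (by omega)) fun U hU => ?_
    simpa only [← deRhamD_eq_extDeriv hg ⟨U, T.2 ▸ hU⟩, Pi.zero_apply] using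
      congrFun hω ⟨U, _⟩
  · have hf₀ : ∀ S, f S = f ⟨∅, card_empty⟩ := fun S =>
      congrArg f (Subtype.ext (card_eq_zero.mp S.2))
    have hconst := eq_C_of_forall_pderiv_eq_zero fun i => by
      simpa [deRhamD_eq_extDeriv (g := fun _ => f ⟨∅, card_empty⟩) hf₀, extDeriv_singleton]
        using congrFun hf ⟨{i}, card_singleton i⟩
    exact ⟨_, funext fun S => (hf₀ S).trans hconst⟩
  · rintro ⟨c, rfl⟩
    funext T
    simp [deRhamD]
end
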